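/- arXiv:1501.03774 — 3 statements merged into one kernel-verified Lean document; each statement's English description precedes it below -/
import Mathlib

section
/- Let k ≥ 2 be an integer and let q = G_{u,v} and t = H_{v,w} be two g-edges sharing the single terminal v and otherwise vertex-disjoint, with open k-capacities CP_k(q) = A and CP_k(t) = B. Then their union (the serial join of q and t) is a g-edge with terminals u and w whose open k-capacity equals A ∩ B. Consequently, the set GI_k of all k-capacities of g-edges is closed under the operations A + B = {a+b : a∈A, b∈B} and A ∩ B. -/
open Finset


open Finset

/-- A finite multigraph given with a reference orientation: each edge `e` goes
from `src e` to `tgt e`.  An orientation of the graph is a sign function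
`σ : E → ℤˣ` telling, for each edge, whether it keeps (`1`) or reverses (`-1`)
its reference direction. -/
structure Multigraph where
  V : Type
  E : Type
  [fintV : Fintype V]
  [fintE : Fintype E]
  [decV : DecidableEq V]
  [decE : DecidableEq E]
  src : E → V
  tgt : E → V

attribute [instance] Multigraph.fintV Multigraph.fintE Multigraph.decV Multigraph.decE

/-- `f` is a flow with respect to the reference orientation: at every vertex the
sum over outgoing edges equals the sum over incoming edges. -/
def Multigraph.IsFlow (G : Multigraph) {M : Type*} [AddCommMonoid M] (f : G.E → M) : Prop :=
  ∀ v : G.V,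
    ∑ e ∈ Finset.univ.filter (fun e => G.src e = v), f e =
    ∑ e ∈ Finset.univ.filter (fun e => G.tgt e = v), f e

/-- `f` is a flow on the orientation `σ` of `G` (values of `f` are read in the
direction given by `σ`). -/
def Multigraph.IsFlowOn (G : Multigraph) {M : Type*} [AddCommGroup M]
    (σ : G.E → ℤˣ) (f : G.E → M) : Prop :=
  G.IsFlow (fun e => ((σ e : ℤ) • f e))

/-- The open interval `(a,b)` of `ℝ/rℤ`: the points traversed strictly clockwise
from `a` to `b`, with the convention `(a,a) = ℝ/rℤ \ {a}`. -/
noncomputable def openArc (r a b : ℝ) : Set (AddCircle r) :=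
  (fun t : ℝ => (t : AddCircle r)) '' Set.Ioo a (a + (r - Int.fract ((a - b) / r) * r))

/-- The closed interval `[a,b]` of `ℝ/rℤ`: the points traversed clockwise from
`a` to `b`, endpoints included, with the convention `[a,a] = {a}`. -/
noncomputable def closedArc (r a b : ℝ) : Set (AddCircle r) :=
  (fun t : ℝ => (t : AddCircle r)) '' Set.Icc a (a + Int.fract ((b - a) / r) * r)

/-- `G` has a circular nowhere-zero `r`-flow: an orientation together with a
real-valued flow all of whose values lie in `[1, r-1]`. -/
def Multigraph.HasCNZF (G : Multigraph) (r : ℝ) : Prop :=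
  ∃ (σ : G.E → ℤˣ) (f : G.E → ℝ), G.IsFlowOn σ f ∧ ∀ e, f e ∈ Set.Icc (1:ℝ) (r - 1)

/-- The circular flow number of `G`, as an extended real (`⊤` if `G` admits no
circular nowhere-zero `r`-flow for any `r`, e.g. if `G` has a bridge). -/
noncomputable def circFlowNumber (G : Multigraph) : EReal :=
  sInf {x : EReal | ∃ r : ℝ, x = (r : EReal) ∧ G.HasCNZF r}

/-- The graph `G ∪ e₀` obtained from `G` by adding one extra edge `e₀ = none`
joining `u` to `v`. -/
def Multigraph.addEdge (G : Multigraph) (u v : G.V) : Multigraph where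
  V := G.V
  E := Option G.E
  src := fun e => e.elim u G.src
  tgt := fun e => e.elim v G.tgt

/-- The capacity of the capacitated g-edge `(G, cap)` with terminals `u,v`:
all values `f e₀` of modular flows `f` on `G ∪ e₀` (over all orientations) whose
value on each edge `e` of `G` lies in the prescribed set `cap e`. -/
def CPcap (r : ℝ) (G : Multigraph) (cap : G.E → Set (AddCircle r)) (u v : G.V) :
    Set (AddCircle r) :=
  {t | ∃ (σ : Option G.E → ℤˣ) (f : Option G.E → AddCircle r),
        (G.addEdge u v).IsFlowOn σ f ∧ (∀ e : G.E, f (some e) ∈ cap e) ∧ f none = t}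

/-- The open `r`-capacity `CP_r(G_{u,v})` of the g-edge `G_{u,v}`. -/
noncomputable def CP (r : ℝ) (G : Multigraph) (u v : G.V) : Set (AddCircle r) :=
  CPcap r G (fun _ => openArc r 1 (r - 1)) u v

/-- A capacitated graph `(G, cap)` admits a flow respecting all capacities
(for `cap e = (1,4) ⊆ ℝ/5ℤ` everywhere this is a sub-5-MCNZF). -/
def HasCapFlow (r : ℝ) (G : Multigraph) (cap : G.E → Set (AddCircle r)) : Prop :=
  ∃ (σ : G.E → ℤˣ) (f : G.E → AddCircle r), G.IsFlowOn σ f ∧ ∀ e, f e ∈ cap e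

/-- Deletion of the edge `e₀`. -/
def Multigraph.deleteEdge (G : Multigraph) (e₀ : G.E) : Multigraph where
  V := G.V
  E := {e : G.E // e ≠ e₀}
  src := fun e => G.src e.1
  tgt := fun e => G.tgt e.1

/-- Degree of a vertex (loops count twice). -/
def Multigraph.degree (G : Multigraph) (v : G.V) : ℕ :=
  (Finset.univ.filter (fun e => G.src e = v)).card +
  (Finset.univ.filter (fun e => G.tgt e = v)).card

/-- The tail of edge `e` in the orientation `σ`. -/
def Multigraph.osrc (G : Multigraph) (σ : G.E → ℤˣ) (e : G.E) : G.V :=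
  if σ e = 1 then G.src e else G.tgt e

/-- The head of edge `e` in the orientation `σ`. -/
def Multigraph.otgt (G : Multigraph) (σ : G.E → ℤˣ) (e : G.E) : G.V :=
  if σ e = 1 then G.tgt e else G.src e

/-- Vertex embedding for the parallel join: `H`'s terminals `u', v'` are glued
onto `G`'s terminals `u, v`; other vertices of `H` are kept. -/
def pjEmbed (G H : Multigraph) (u v : G.V) (u' v' : H.V) (x : H.V) :
    G.V ⊕ {x : H.V // x ≠ u' ∧ x ≠ v'} :=
  if h1 : x = u' then Sum.inl u
  else if h2 : x = v' then Sum.inl v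
  else Sum.inr ⟨x, h1, h2⟩

/-- Parallel join of the g-edges `G_{u,v}` and `H_{u',v'}`: their disjoint union
with `u'` identified with `u` and `v'` identified with `v`. -/
def parallelJoin (G H : Multigraph) (u v : G.V) (u' v' : H.V) : Multigraph where
  V := G.V ⊕ {x : H.V // x ≠ u' ∧ x ≠ v'}
  E := G.E ⊕ H.E
  src := Sum.elim (fun e => Sum.inl (G.src e)) (fun e => pjEmbed G H u v u' v' (H.src e))
  tgt := Sum.elim (fun e => Sum.inl (G.tgt e)) (fun e => pjEmbed G H u v u' v' (H.tgt e))

/-- Vertex embedding for the serial join: `H`'s terminal `v'` is glued onto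
`G`'s vertex `v`; other vertices of `H` are kept. -/
def sjEmbed (G H : Multigraph) (v : G.V) (v' : H.V) (x : H.V) :
    G.V ⊕ {x : H.V // x ≠ v'} :=
  if h : x = v' then Sum.inl v else Sum.inr ⟨x, h⟩

/-- Serial join of the g-edges `G_{u,v}` and `H_{v',w}`: their disjoint union
with `v'` identified with `v`. -/
def serialJoin (G H : Multigraph) (v : G.V) (v' : H.V) : Multigraph where
  V := G.V ⊕ {x : H.V // x ≠ v'}
  E := G.E ⊕ H.E
  src := Sum.elim (fun e => Sum.inl (G.src e)) (fun e => sjEmbed G H v v' (H.src e))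
  tgt := Sum.elim (fun e => Sum.inl (G.tgt e)) (fun e => sjEmbed G H v v' (H.tgt e))

/-- `A` is a graphic subset of `ℝ/kℤ`: it is the open `k`-capacity of some
g-edge. -/
def Graphic (k : ℝ) (A : Set (AddCircle k)) : Prop :=
  ∃ (G : Multigraph) (u v : G.V), u ≠ v ∧ CP k G u v = A


/-!
Because the arc `(1, k-1)` is closed under negation, orientations can be dropped: `t ∈ CP(G_{u,v})`
iff some `f : E(G) → ℝ/kℤ` with values in the arc has net outflow `t` at `v`, `-t` at `u` and `0`
elsewhere. In a join, the net outflow at a vertex is the sum of its net outflows in the pieces glued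
there. Since net outflows always sum to zero, in the serial join conservation inside `H` away from
`v'` forces `H` to carry exactly `t` from `w` to `v'`, and then `G` carries `t` from `v` to `u`; so
the capacity is `CP(G) ∩ CP(H)`. In the parallel join the pieces carry some `a` and `b` with
`a + b = t`, so its capacity is `CP(G) + CP(H)`. The serial and parallel joins of g-edges are
g-edges, whence the closure of `GI_k`.
-/

theorem eq_of_sum_eq_of_forall_ne {V A : Type*} [Fintype V] [DecidableEq V] [AddCommGroup A]
    {g h : V → A} (x₀ : V) (hsum : ∑ x, g x = ∑ x, h x) (hne : ∀ x, x ≠ x₀ → g x = h x) :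
    g = h := by
  have hx₀ : g x₀ = h x₀ := by
    rwa [← Finset.add_sum_erase _ _ (mem_univ x₀), ← Finset.add_sum_erase _ h (mem_univ x₀),
      Finset.sum_congr rfl fun x hx => hne x (ne_of_mem_erase hx), add_left_inj] at hsum
  funext x
  by_cases hx : x = x₀
  · rwa [hx]
  · exact hne x hx

theorem sum_single_sub_single {V A : Type*} [Fintype V] [DecidableEq V] [AddCommGroup A]
    (u v : V) (t : A) : ∑ x, (Pi.single v t - Pi.single u t : V → A) x = 0 := by
  simp [Finset.sum_sub_distrib]

theorem units_zsmul_mem_of_neg_mem {M : Type*} [AddGroup M] {S : Set M} (hS : ∀ x ∈ S, -x ∈ S)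
    (σ : ℤˣ) {x : M} (hx : x ∈ S) : (σ : ℤ) • x ∈ S := by
  rcases Int.units_eq_one_or σ with rfl | rfl
  · simpa using hx
  · simpa using hS x hx

namespace Multigraph

variable {A : Type*} [AddCommGroup A]

def netOut (G : Multigraph) (f : G.E → A) (x : G.V) : A :=
  ∑ e, (if G.src e = x then f e else 0) - ∑ e, (if G.tgt e = x then f e else 0)

theorem isFlow_iff_netOut_eq_zero (G : Multigraph) (f : G.E → A) :
    G.IsFlow f ↔ G.netOut f = 0 := by
  simp only [IsFlow, funext_iff, netOut, Pi.zero_apply, sub_eq_zero, Finset.sum_filter]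

theorem sum_netOut (G : Multigraph) (f : G.E → A) : ∑ x, G.netOut f x = 0 := by
  have sum_ite_endpoint (p : G.E → G.V) : ∑ x, ∑ e, (if p e = x then f e else 0) = ∑ e, f e := by
    rw [Finset.sum_comm]
    simp
  simp only [netOut, Finset.sum_sub_distrib, sum_ite_endpoint, sub_self]

theorem IsFlow.zsmul {G : Multigraph} {f : G.E → A} (hf : G.IsFlow f) (n : ℤ) :
    G.IsFlow (n • f) :=
  fun x => by simp only [Pi.smul_apply, ← Finset.smul_sum, hf x]

theorem netOut_addEdge (G : Multigraph) (u v : G.V) (F : (G.addEdge u v).E → A) (x : G.V) :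
    (G.addEdge u v).netOut F x = G.netOut (fun e => F (some e)) x +
      (Pi.single u (F none) : G.V → A) x - (Pi.single v (F none) : G.V → A) x := by
  have sum_option (g : (G.addEdge u v).E → A) : ∑ e, g e = g none + ∑ e, g (some e) :=
    Fintype.sum_option g
  simp only [netOut, sum_option, Pi.single_apply, eq_comm (a := x)]
  simp only [addEdge, Option.elim]
  abel!

theorem isFlow_addEdge_iff (G : Multigraph) (u v : G.V) (F : (G.addEdge u v).E → A) :
    (G.addEdge u v).IsFlow F ↔
      G.netOut (fun e => F (some e)) = (Pi.single v (F none) - Pi.single u (F none) : G.V → A) := by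
  rw [isFlow_iff_netOut_eq_zero, funext_iff, funext_iff]
  exact forall_congr' fun (x : G.V) =>
    (Eq.congr_left (netOut_addEdge G u v F x)).trans (sub_eq_zero.trans eq_sub_iff_add_eq.symm)

end Multigraph

theorem neg_mem_openArc {r a b : ℝ} (hr : r ≠ 0) (hab : ((a + b : ℝ) : AddCircle r) = 0)
    {x : AddCircle r} (hx : x ∈ openArc r a b) : -x ∈ openArc r a b := by
  obtain ⟨s, hs, rfl⟩ := hx
  set L := r - Int.fract ((a - b) / r) * r
  have hL : a + (a + L) = (a + b) + ((⌊(a - b) / r⌋ + 1 : ℤ) : ℝ) * r := by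
    simp only [L, Int.fract]
    push_cast
    field_simp
    ring
  refine ⟨a + (a + L) - s, ⟨by linarith [hs.2], by linarith [hs.1]⟩, ?_⟩
  change ((a + (a + L) - s : ℝ) : AddCircle r) = -(s : AddCircle r)
  rw [hL, AddCircle.coe_sub, AddCircle.coe_add, hab, ← zsmul_eq_mul, AddCircle.coe_zsmul,
    AddCircle.coe_period, smul_zero, add_zero, zero_sub]

theorem mem_CPcap_iff {r : ℝ} {G : Multigraph} {cap : G.E → Set (AddCircle r)}
    (hcap : ∀ e, ∀ x ∈ cap e, -x ∈ cap e) {u v : G.V} {t : AddCircle r} :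
    t ∈ CPcap r G cap u v ↔ ∃ f : G.E → AddCircle r,
      G.netOut f = (Pi.single v t - Pi.single u t : G.V → AddCircle r) ∧ ∀ e, f e ∈ cap e := by
  constructor
  · rintro ⟨σ, f, hflow, hf, rfl⟩
    -- scaling by `σ none` keeps a flow and makes `e₀` carry `f none` in its reference direction
    set g : Option G.E → AddCircle r := (σ none : ℤ) • fun e => (σ e : ℤ) • f e
    have hg_none : g none = f none := by
      simp only [g, Pi.smul_apply, smul_smul, Int.units_coe_mul_self, one_smul]
    have hg := (Multigraph.isFlow_addEdge_iff G u v g).mp (hflow.zsmul _)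
    rw [hg_none] at hg
    exact ⟨_, hg, fun e => units_zsmul_mem_of_neg_mem (hcap e) _
      (units_zsmul_mem_of_neg_mem (hcap e) _ (hf e))⟩
  · rintro ⟨f, hflow, hf⟩
    refine ⟨1, fun e => e.elim t f, (Multigraph.isFlow_addEdge_iff G u v _).mpr ?_, hf, rfl⟩
    simpa only [Pi.one_apply, Units.val_one, one_smul, Option.elim_some, Option.elim_none]
      using hflow

theorem mem_CP_iff {r : ℝ} (hr : r ≠ 0) {G : Multigraph} {u v : G.V} {t : AddCircle r} :
    t ∈ CP r G u v ↔ ∃ f : G.E → AddCircle r,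
      G.netOut f = (Pi.single v t - Pi.single u t : G.V → AddCircle r) ∧
        ∀ e, f e ∈ openArc r 1 (r - 1) :=
  mem_CPcap_iff fun _ _ => neg_mem_openArc hr (by rw [add_sub_cancel, AddCircle.coe_period])

section SerialJoin

variable {A : Type*} [AddCommGroup A] {G H : Multigraph} {v : G.V} {v' : H.V}

theorem sjEmbed_eq_inl_iff {y : H.V} {x : G.V} :
    sjEmbed G H v v' y = Sum.inl x ↔ y = v' ∧ v = x := by
  unfold sjEmbed
  split_ifs <;> simp_all

theorem sjEmbed_eq_inr_iff {y : H.V} {z : {y : H.V // y ≠ v'}} :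
    sjEmbed G H v v' y = Sum.inr z ↔ y = z := by
  unfold sjEmbed
  split_ifs with h
  · simpa [h] using fun h' => z.2 h'.symm
  · simp [Subtype.ext_iff]

-- `Fintype.sum_sum_type` at the edge type of the join, where `simp` does not find it by itself
theorem sum_serialJoin (g : (serialJoin G H v v').E → A) :
    ∑ e, g e = ∑ e, g (Sum.inl e) + ∑ e, g (Sum.inr e) :=
  Fintype.sum_sum_type g

theorem netOut_serialJoin_inl (fG : G.E → A) (fH : H.E → A) (x : G.V) :
    (serialJoin G H v v').netOut (Sum.elim fG fH) (Sum.inl x) =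
      G.netOut fG x + (Pi.single v (H.netOut fH v') : G.V → A) x := by
  simp only [Multigraph.netOut, sum_serialJoin]
  by_cases hx : x = v
  · subst hx
    simp only [serialJoin, Sum.elim_inl, Sum.elim_inr, Sum.inl.injEq, sjEmbed_eq_inl_iff,
      and_true, Pi.single_eq_same]
    abel
  · simp [serialJoin, sjEmbed_eq_inl_iff, hx, Ne.symm hx]

theorem netOut_serialJoin_inr (fG : G.E → A) (fH : H.E → A) (y : {y : H.V // y ≠ v'}) :
    (serialJoin G H v v').netOut (Sum.elim fG fH) (Sum.inr y) = H.netOut fH y := by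
  simp only [Multigraph.netOut, sum_serialJoin]
  simp [serialJoin, sjEmbed_eq_inr_iff]

theorem serialJoin_netOut_eq_iff {u : G.V} {w : H.V} (hw : w ≠ v') (fG : G.E → A)
    (fH : H.E → A) (t : A) :
    (serialJoin G H v v').netOut (Sum.elim fG fH) =
        (Pi.single (Sum.inr ⟨w, hw⟩) t - Pi.single (Sum.inl u) t : G.V ⊕ {y // y ≠ v'} → A) ↔
      G.netOut fG = (Pi.single v t - Pi.single u t : G.V → A) ∧
        H.netOut fH = (Pi.single w t - Pi.single v' t : H.V → A) := by
  constructor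
  · intro h
    have hH : H.netOut fH = (Pi.single w t - Pi.single v' t : H.V → A) := by
      refine eq_of_sum_eq_of_forall_ne v' (by rw [Multigraph.sum_netOut, sum_single_sub_single]) ?_
      intro y hy
      simpa [netOut_serialJoin_inr, Pi.single_apply, hy] using congrFun h (Sum.inr ⟨y, hy⟩)
    refine ⟨funext fun x => ?_, hH⟩
    have hx := congrFun h (Sum.inl x)
    rw [netOut_serialJoin_inl, hH] at hx
    simp only [Pi.sub_apply, Pi.single_apply, Sum.inl.injEq, reduceCtorEq, hw.symm, if_true,
      if_false] at hx ⊢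
    split_ifs at hx ⊢ <;> linear_combination (norm := abel) hx
  · rintro ⟨hG, hH⟩
    funext z
    rcases z with x | ⟨y, hy⟩
    · rw [netOut_serialJoin_inl, hG, hH]
      simp only [Pi.sub_apply, Pi.single_apply, Sum.inl.injEq, reduceCtorEq, hw.symm, if_true,
        if_false]
      split_ifs <;> abel
    · rw [netOut_serialJoin_inr, hH]
      simp [Pi.single_apply, hy]

end SerialJoin

section ParallelJoin

variable {A : Type*} [AddCommGroup A] {G H : Multigraph} {u v : G.V} {u' v' : H.V}

theorem pjEmbed_eq_inl_iff (huv' : u' ≠ v') {y : H.V} {x : G.V} :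
    pjEmbed G H u v u' v' y = Sum.inl x ↔ y = u' ∧ u = x ∨ y = v' ∧ v = x := by
  unfold pjEmbed
  split_ifs with h1 h2
  · simp [h1, huv']
  · simp_all
  · simp_all

theorem pjEmbed_eq_inr_iff {y : H.V} {z : {y : H.V // y ≠ u' ∧ y ≠ v'}} :
    pjEmbed G H u v u' v' y = Sum.inr z ↔ y = z := by
  unfold pjEmbed
  split_ifs with h1 h2
  · simpa [h1] using fun h => z.2.1 h.symm
  · simpa [h2] using fun h => z.2.2 h.symm
  · simp [Subtype.ext_iff]

theorem sum_parallelJoin (g : (parallelJoin G H u v u' v').E → A) :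
    ∑ e, g e = ∑ e, g (Sum.inl e) + ∑ e, g (Sum.inr e) :=
  Fintype.sum_sum_type g

theorem netOut_parallelJoin_inl (huv : u ≠ v) (huv' : u' ≠ v') (fG : G.E → A) (fH : H.E → A)
    (x : G.V) :
    (parallelJoin G H u v u' v').netOut (Sum.elim fG fH) (Sum.inl x) =
      G.netOut fG x + (Pi.single u (H.netOut fH u') : G.V → A) x +
        (Pi.single v (H.netOut fH v') : G.V → A) x := by
  simp only [Multigraph.netOut, sum_parallelJoin]
  by_cases hu : x = u
  · subst hu
    simp only [parallelJoin, Sum.elim_inl, Sum.elim_inr, Sum.inl.injEq, pjEmbed_eq_inl_iff huv',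
      huv, huv.symm, and_true, and_false, or_false, Pi.single_eq_same, ne_eq, not_false_eq_true,
      Pi.single_eq_of_ne, add_zero]
    abel
  by_cases hv : x = v
  · subst hv
    simp only [parallelJoin, Sum.elim_inl, Sum.elim_inr, Sum.inl.injEq, pjEmbed_eq_inl_iff huv',
      hu, Ne.symm hu, and_true, and_false, false_or, Pi.single_eq_same, ne_eq, not_false_eq_true,
      Pi.single_eq_of_ne, add_zero]
    abel
  · simp [parallelJoin, pjEmbed_eq_inl_iff huv', hu, hv, Ne.symm hu, Ne.symm hv]

theorem netOut_parallelJoin_inr (fG : G.E → A) (fH : H.E → A)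
    (y : {y : H.V // y ≠ u' ∧ y ≠ v'}) :
    (parallelJoin G H u v u' v').netOut (Sum.elim fG fH) (Sum.inr y) = H.netOut fH y := by
  simp only [Multigraph.netOut, sum_parallelJoin]
  simp [parallelJoin, pjEmbed_eq_inr_iff]

theorem parallelJoin_netOut_eq_iff (huv : u ≠ v) (huv' : u' ≠ v') (fG : G.E → A)
    (fH : H.E → A) (t : A) :
    (parallelJoin G H u v u' v').netOut (Sum.elim fG fH) =
        (Pi.single (Sum.inl v) t - Pi.single (Sum.inl u) t :
          G.V ⊕ {y // y ≠ u' ∧ y ≠ v'} → A) ↔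
      ∃ a b, a + b = t ∧ G.netOut fG = (Pi.single v a - Pi.single u a : G.V → A) ∧
        H.netOut fH = (Pi.single v' b - Pi.single u' b : H.V → A) := by
  constructor
  · intro h
    set b := H.netOut fH v'
    have hH : H.netOut fH = (Pi.single v' b - Pi.single u' b : H.V → A) := by
      refine eq_of_sum_eq_of_forall_ne u'
        (by rw [Multigraph.sum_netOut, sum_single_sub_single]) fun y hyu => ?_
      by_cases hyv : y = v'
      · subst hyv
        simp [b, hyu]
      · simpa [netOut_parallelJoin_inr, hyu, hyv] using congrFun h (Sum.inr ⟨y, hyu, hyv⟩)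
    refine ⟨t - b, b, sub_add_cancel t b, funext fun x => ?_, hH⟩
    have hx := congrFun h (Sum.inl x)
    rw [netOut_parallelJoin_inl huv huv', hH] at hx
    simp only [Pi.sub_apply, Pi.single_apply, Sum.inl.injEq, huv', huv'.symm, if_true,
      if_false] at hx ⊢
    split_ifs at hx ⊢ <;> linear_combination (norm := abel) hx
  · rintro ⟨a, b, rfl, hG, hH⟩
    funext z
    rcases z with x | ⟨y, hyu, hyv⟩
    · rw [netOut_parallelJoin_inl huv huv', hG, hH]
      simp only [Pi.sub_apply, Pi.single_apply, Sum.inl.injEq, huv', huv'.symm, if_true,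
        if_false]
      split_ifs <;> abel
    · rw [netOut_parallelJoin_inr, hH]
      simp [hyu, hyv]

end ParallelJoin

section Capacity

variable {r : ℝ} {G H : Multigraph}

theorem CP_serialJoin (hr : r ≠ 0) {u v : G.V} {v' w : H.V} (hw : w ≠ v') :
    CP r (serialJoin G H v v') (Sum.inl u) (Sum.inr ⟨w, hw⟩) = CP r G u v ∩ CP r H v' w := by
  ext t
  rw [Set.mem_inter_iff, mem_CP_iff hr, mem_CP_iff hr]
  refine (mem_CP_iff hr).trans ⟨?_, ?_⟩
  · rintro ⟨F, hF, hcap⟩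
    have hF_elim : (Sum.elim (fun e => F (.inl e)) (fun e => F (.inr e)) :
        (serialJoin G H v v').E → AddCircle r) = F := funext fun e => by cases e <;> rfl
    obtain ⟨hG, hH⟩ := (serialJoin_netOut_eq_iff hw _ _ t).mp (by rwa [hF_elim])
    exact ⟨⟨_, hG, fun e => hcap (Sum.inl e)⟩, ⟨_, hH, fun e => hcap (Sum.inr e)⟩⟩
  · rintro ⟨⟨fG, hG, hcapG⟩, ⟨fH, hH, hcapH⟩⟩
    exact ⟨Sum.elim fG fH, (serialJoin_netOut_eq_iff hw fG fH t).mpr ⟨hG, hH⟩,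
      Sum.forall.mpr ⟨hcapG, hcapH⟩⟩

open Pointwise in
theorem CP_parallelJoin (hr : r ≠ 0) {u v : G.V} {u' v' : H.V} (huv : u ≠ v) (huv' : u' ≠ v') :
    CP r (parallelJoin G H u v u' v') (Sum.inl u) (Sum.inl v) = CP r G u v + CP r H u' v' := by
  ext t
  refine (mem_CP_iff hr).trans ⟨?_, ?_⟩
  · rintro ⟨F, hF, hcap⟩
    have hF_elim : (Sum.elim (fun e => F (.inl e)) (fun e => F (.inr e)) :
        (parallelJoin G H u v u' v').E → AddCircle r) = F := funext fun e => by cases e <;> rfl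
    obtain ⟨a, b, rfl, hG, hH⟩ :=
      (parallelJoin_netOut_eq_iff huv huv' _ _ t).mp (by rwa [hF_elim])
    exact ⟨a, (mem_CP_iff hr).mpr ⟨_, hG, fun e => hcap (Sum.inl e)⟩,
      b, (mem_CP_iff hr).mpr ⟨_, hH, fun e => hcap (Sum.inr e)⟩, rfl⟩
  · rintro ⟨a, ha, b, hb, rfl⟩
    obtain ⟨fG, hG, hcapG⟩ := (mem_CP_iff hr).mp ha
    obtain ⟨fH, hH, hcapH⟩ := (mem_CP_iff hr).mp hb
    exact ⟨Sum.elim fG fH, (parallelJoin_netOut_eq_iff huv huv' fG fH _).mpr ⟨a, b, rfl, hG, hH⟩,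
      Sum.forall.mpr ⟨hcapG, hcapH⟩⟩

end Capacity

open Pointwise in
/-- The open `k`-capacity of the serial join of two g-edges
sharing a single terminal (and otherwise disjoint) is the intersection of
their open `k`-capacities; consequently the set `GI_k` of graphic subsets of
`ℝ/kℤ` is closed under pointwise addition and under intersection. -/
theorem serialJoin_capacity (k : ℕ) (hk : 2 ≤ k) :
    (∀ (G H : Multigraph) (u v : G.V) (v' w : H.V), u ≠ v →
      ∀ hw : w ≠ v',
      CP (k : ℝ) (serialJoin G H v v') (Sum.inl u) (Sum.inr ⟨w, hw⟩)
        = CP (k : ℝ) G u v ∩ CP (k : ℝ) H v' w) ∧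
    (∀ A B : Set (AddCircle (k : ℝ)), Graphic (k : ℝ) A → Graphic (k : ℝ) B →
      Graphic (k : ℝ) (A + B) ∧ Graphic (k : ℝ) (A ∩ B)) := by
  have hk0 : (k : ℝ) ≠ 0 := Nat.cast_ne_zero.mpr (by omega)
  refine ⟨fun G H u v v' w _ hw => CP_serialJoin hk0 hw, ?_⟩
  rintro A B ⟨G, u, v, huv, rfl⟩ ⟨H, u', v', huv', rfl⟩
  exact ⟨⟨parallelJoin G H u v u' v', Sum.inl u, Sum.inl v, Sum.inl_injective.ne huv,
      CP_parallelJoin hk0 huv huv'⟩,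
    ⟨serialJoin G H v u', Sum.inl u, Sum.inr ⟨v', huv'.symm⟩, Sum.inl_ne_inr,
      CP_serialJoin hk0 huv'.symm⟩⟩
end

section
/- Let G be a capacitated graph containing an odd cycle C all of whose vertices have degree 3 in G, such that all edges of C carry the same capacity A, where A is a symmetric union of exactly two open integer unit intervals of ℝ/5ℤ (i.e., Me(A) = 2), and the third edge incident with each vertex of C has capacity contained in (1,4). Then G admits no sub-5-MCNZF; consequently, any graph obtained by realizing each capacity by a g-edge of that open 5-capacity has circular flow number at least 5. -/
open Finset


open Finset

/-- Vertex embedding for edge replacement. -/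
def erEmbed (G : Multigraph) (H : G.E → Multigraph) (a b : ∀ e, (H e).V) (e : G.E)
    (x : (H e).V) : G.V ⊕ Σ e : G.E, {x : (H e).V // x ≠ a e ∧ x ≠ b e} :=
  if h1 : x = a e then Sum.inl (G.src e)
  else if h2 : x = b e then Sum.inl (G.tgt e)
  else Sum.inr ⟨e, x, h1, h2⟩

/-- The graph obtained from `G` by replacing each edge `e` by the g-edge
`(H e)_{a e, b e}`, the terminal `a e` being glued onto `G.src e` and `b e`
onto `G.tgt e`. -/
def edgeReplace (G : Multigraph) (H : G.E → Multigraph) (a b : ∀ e, (H e).V) : Multigraph where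
  V := G.V ⊕ Σ e : G.E, {x : (H e).V // x ≠ a e ∧ x ≠ b e}
  E := Σ e : G.E, (H e).E
  src := fun ee => erEmbed G H a b ee.1 ((H ee.1).src ee.2)
  tgt := fun ee => erEmbed G H a b ee.1 ((H ee.1).tgt ee.2)

/-!
Read the flow along the odd cycle in its direction of traversal. Every cycle value lies in
`A = I ∪ -I` for a unit arc `I`, and conservation at a cycle vertex makes the difference of two
consecutive cycle values equal to `±` the value of the third edge there, a point of `(1, 4)`.
Two points of one unit arc never differ by such an amount, so consecutive cycle values alternate
between `I` and `-I`, which is impossible around an odd cycle.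

A circular nowhere-zero `r`-flow with `r < 5` on the realised graph, scaled by `5 / r` and read
modulo 5, takes values in `(1, 4)`; the net outflow of each gadget at its terminal then defines a
flow on `G` within the capacities `CP`, which the first part excludes.
-/

open Pointwise

section Arcs

variable {r : ℝ}

theorem openArc_eq_image {a b : ℝ} (hab : 0 < b - a) (hbr : b - a < r) :
    openArc r a b = (fun t : ℝ => (t : AddCircle r)) '' Set.Ioo a b := by
  have hr : 0 < r := hab.trans hbr
  have hfloor : ⌊(a - b) / r⌋ = -1 := by
    rw [Int.floor_eq_iff]
    constructor
    · rw [le_div_iff₀ hr]; push_cast; linarith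
    · rw [div_lt_iff₀ hr]; push_cast; linarith
  have hend : a + (r - Int.fract ((a - b) / r) * r) = b := by
    rw [Int.fract, hfloor]; field_simp; push_cast; ring
  rw [openArc, hend]

theorem neg_image_coe_Ioo (a b : ℝ) :
    -((fun t : ℝ => (t : AddCircle r)) '' Set.Ioo a b) =
      (fun t : ℝ => (t : AddCircle r)) '' Set.Ioo (-b) (-a) := by
  rw [← Set.image_neg_eq_neg, Set.image_image, ← Set.image_neg_Ioo, Set.image_image]
  rfl

theorem neg_openArc_add_one (hr : 1 < r) (a : ℝ) :
    -openArc r a (a + 1) = openArc r (-a - 1) (-a) := by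
  rw [openArc_eq_image (by linarith) (by linarith), openArc_eq_image (by linarith) (by linarith),
    neg_image_coe_Ioo, neg_add']

theorem neg_openArc_one_sub_one (hr : 2 < r) : -openArc r 1 (r - 1) = openArc r 1 (r - 1) := by
  have hshift : Set.Ioo 1 (r - 1) = (· + r) '' Set.Ioo (-(r - 1)) (-1) := by
    rw [Set.image_add_const_Ioo]; ring_nf
  rw [openArc_eq_image (by linarith) (by linarith), neg_image_coe_Ioo, hshift, Set.image_image]
  simp only [AddCircle.coe_add_period]

theorem sub_notMem_openArc_one_sub_one (hr : 2 < r) {a : ℝ} {x y : AddCircle r}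
    (hx : x ∈ openArc r a (a + 1)) (hy : y ∈ openArc r a (a + 1)) :
    x - y ∉ openArc r 1 (r - 1) := by
  have : Fact (0 < r) := ⟨by linarith⟩
  rw [openArc_eq_image (by linarith) (by linarith)] at hx hy
  rw [openArc_eq_image (by linarith) (by linarith)]
  rintro ⟨w, hw, hxyw⟩
  obtain ⟨u, hu, rfl⟩ := hx
  obtain ⟨v, hv, rfl⟩ := hy
  have hcoe : (u : AddCircle r) = ((v + w : ℝ) : AddCircle r) := by
    simp only at hxyw
    rw [AddCircle.coe_add, hxyw, add_sub_cancel]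
  have := (AddCircle.coe_eq_coe_iff_of_mem_Ico (a := a) ⟨hu.1.le, by linarith [hu.2]⟩
    ⟨by linarith [hv.1, hw.1], by linarith [hv.2, hw.2]⟩).1 hcoe
  linarith [hu.2, hv.1, hw.1]

end Arcs

theorem Finset.exists_eq_one_of_sum_eq_one {ι : Type*} [DecidableEq ι] {s : Finset ι}
    {f : ι → ℕ} (h : ∑ i ∈ s, f i = 1) : ∃ i ∈ s, f i = 1 ∧ ∀ j ∈ s, j ≠ i → f j = 0 := by
  obtain ⟨i, hi, hfi⟩ := Finset.exists_ne_zero_of_sum_ne_zero (h.trans_ne one_ne_zero)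
  have hsplit := Finset.add_sum_erase s f hi
  refine ⟨i, hi, by omega, fun j hj hji => ?_⟩
  have hrest : ∑ k ∈ s.erase i, f k = 0 := by omega
  exact Finset.sum_eq_zero_iff.1 hrest j (Finset.mem_erase.2 ⟨hji, hj⟩)

namespace Multigraph

variable (G : Multigraph) {M : Type*} [AddCommGroup M]

def incidence (v : G.V) (e : G.E) : ℕ :=
  (if G.src e = v then 1 else 0) + (if G.tgt e = v then 1 else 0)

def outflow (h : G.E → M) (v : G.V) (e : G.E) : M :=
  (if G.src e = v then h e else 0) - (if G.tgt e = v then h e else 0)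

def netOutflow (h : G.E → M) (v : G.V) : M :=
  ∑ e, G.outflow h v e

variable {G}

theorem degree_eq_sum_incidence (v : G.V) : G.degree v = ∑ e, G.incidence v e := by
  simp only [degree, incidence, Finset.sum_add_distrib, Finset.sum_boole, Nat.cast_id]

theorem isFlow_iff_netOutflow_eq_zero {h : G.E → M} :
    G.IsFlow h ↔ ∀ v, G.netOutflow h v = 0 := by
  simp only [IsFlow, netOutflow, outflow, Finset.sum_sub_distrib, ← Finset.sum_filter, sub_eq_zero]

theorem sum_netOutflow_eq_zero (h : G.E → M) : ∑ v, G.netOutflow h v = 0 := by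
  simp only [netOutflow, outflow]
  rw [Finset.sum_comm]
  simp [Finset.sum_sub_distrib]

theorem outflow_eq_zero_of_incidence_eq_zero {h : G.E → M} {v : G.V} {e : G.E}
    (he : G.incidence v e = 0) : G.outflow h v e = 0 := by
  unfold incidence at he
  unfold outflow
  split_ifs at he ⊢ <;> simp_all

theorem outflow_eq_or_eq_neg_of_incidence_eq_one {h : G.E → M} {v : G.V} {e : G.E}
    (he : G.incidence v e = 1) : G.outflow h v e = h e ∨ G.outflow h v e = -h e := by
  unfold incidence at he
  unfold outflow
  split_ifs at he ⊢ <;> simp_all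

theorem IsFlow.exists_third_edge {h : G.E → M} (hh : G.IsFlow h) {v : G.V}
    (hdeg : G.degree v = 3) (S : Finset G.E) (hS : ∑ e ∈ S, G.incidence v e = 2) :
    ∃ e ∉ S, (G.src e = v ∨ G.tgt e = v) ∧
      (∑ e ∈ S, G.outflow h v e = h e ∨ ∑ e ∈ S, G.outflow h v e = -h e) := by
  have hrest : ∑ e ∈ Sᶜ, G.incidence v e = 1 := by
    have := Finset.sum_add_sum_compl S (G.incidence v)
    rw [← degree_eq_sum_incidence, hdeg, hS] at this
    omega
  obtain ⟨e, he, he1, hothers⟩ := Finset.exists_eq_one_of_sum_eq_one hrest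
  have hsum : ∑ f ∈ Sᶜ, G.outflow h v f = G.outflow h v e :=
    Finset.sum_eq_single_of_mem e he
      fun f hf hfe => outflow_eq_zero_of_incidence_eq_zero (hothers f hf hfe)
  have hzero := Finset.sum_add_sum_compl S (G.outflow h v)
  have hnet : ∑ f, G.outflow h v f = 0 := isFlow_iff_netOutflow_eq_zero.1 hh v
  rw [hsum, hnet, add_eq_zero_iff_eq_neg] at hzero
  refine ⟨e, Finset.mem_compl.1 he, ?_, ?_⟩
  · unfold incidence at he1
    split_ifs at he1 with h1 h2 <;> simp_all
  · rcases outflow_eq_or_eq_neg_of_incidence_eq_one (h := h) he1 with h' | h' <;> simp [hzero, h']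

end Multigraph

theorem Set.mem_of_eq_or_eq_neg {M : Type*} [InvolutiveNeg M] {S : Set M} (hS : -S = S) {x y : M}
    (hxy : y = x ∨ y = -x) (hx : x ∈ S) : y ∈ S := by
  rcases hxy with rfl | rfl
  · exact hx
  · rwa [← hS, Set.neg_mem_neg]

theorem mem_iff_notMem_of_sub_mem {M : Type*} [AddCommGroup M] {I B : Set M}
    (hIB : ∀ x ∈ I, ∀ y ∈ I, x - y ∉ B) {x y : M} (hx : x ∈ I ∪ -I) (hy : y ∈ I ∪ -I)
    (hxy : y - x ∈ B) : y ∈ I ↔ x ∉ I := by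
  constructor
  · exact fun hyI hxI => hIB y hyI x hxI hxy
  · intro hxI
    by_contra hyI
    have hx' : -x ∈ I := Set.mem_neg.1 (hx.resolve_left hxI)
    have hy' : -y ∈ I := Set.mem_neg.1 (hy.resolve_left hyI)
    exact hIB (-x) hx' (-y) hy' (by rwa [neg_sub_neg])

theorem Odd.not_forall_succ_mod_iff_not {m : ℕ} (hodd : Odd m) (P : ℕ → Prop) :
    ¬ ∀ i < m, (P ((i + 1) % m) ↔ ¬ P i) := by
  intro h
  have hm := hodd.pos
  have hparity : ∀ i < m, (P i ↔ (Even i ↔ P 0)) := by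
    intro i
    induction i with
    | zero => simp
    | succ i ih =>
      intro hi
      have hstep := h i (by omega)
      rw [Nat.mod_eq_of_lt hi] at hstep
      rw [Nat.even_add_one]
      have := ih (by omega)
      tauto
  have hlast := h (m - 1) (by omega)
  rw [Nat.sub_add_cancel hm, Nat.mod_self] at hlast
  have heven : Even (m - 1) := Nat.Odd.sub_odd hodd odd_one
  have := hparity (m - 1) (by omega)
  tauto

section ClosedWalk

variable {V : Type*} {m : ℕ} {p : ℕ → V}

theorem apply_succ_mod_of_closed (hclosed : p m = p 0) {j : ℕ} (hj : j < m) :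
    p ((j + 1) % m) = p (j + 1) := by
  rcases Nat.lt_or_eq_of_le (Nat.succ_le_of_lt hj) with hlt | heq
  · rw [Nat.mod_eq_of_lt hlt]
  · rw [← Nat.succ_eq_add_one, heq, Nat.mod_self, hclosed]

theorem sum_range_ite_apply_eq [DecidableEq V] {N : Type*} [AddCommMonoid N]
    (hinj : Set.InjOn p (Set.Iio m)) {k : ℕ} (hk : k < m) (y : ℕ → N) :
    ∑ j ∈ Finset.range m, (if p j = p k then y j else 0) = y k := by
  rw [Finset.sum_eq_single_of_mem k (Finset.mem_range.2 hk), if_pos rfl]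
  intro j hj hjk
  exact if_neg fun h => hjk (hinj (Finset.mem_range.1 hj) hk h)

theorem sum_range_ite_apply_succ_eq [DecidableEq V] {N : Type*} [AddCommMonoid N]
    (hclosed : p m = p 0) (hinj : Set.InjOn p (Set.Iio m)) {i : ℕ} (hi : i < m) (y : ℕ → N) :
    ∑ j ∈ Finset.range m, (if p (j + 1) = p (i + 1) then y j else 0) = y i := by
  rw [Finset.sum_eq_single_of_mem i (Finset.mem_range.2 hi), if_pos rfl]
  intro j hj hji
  have hj := Finset.mem_range.1 hj
  refine if_neg fun h => hji ?_
  rw [← apply_succ_mod_of_closed hclosed hj, ← apply_succ_mod_of_closed hclosed hi] at h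
  have hmod := hinj (Nat.mod_lt _ (by omega)) (Nat.mod_lt _ (by omega)) h
  exact Nat.ModEq.eq_of_lt_of_lt (Nat.ModEq.add_right_cancel' 1 hmod) hj hi

end ClosedWalk

namespace Multigraph

variable {G : Multigraph} {M : Type*} [AddCommGroup M] {m : ℕ} {p : ℕ → G.V} {pe : ℕ → G.E}

variable (G) in
def walkFlow (p : ℕ → G.V) (pe : ℕ → G.E) (h : G.E → M) (j : ℕ) : M :=
  if G.src (pe j) = p j then h (pe j) else -h (pe j)

theorem walkFlow_eq_or_eq_neg (h : G.E → M) (j : ℕ) :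
    G.walkFlow p pe h j = h (pe j) ∨ G.walkFlow p pe h j = -h (pe j) := by
  unfold walkFlow
  split_ifs
  exacts [Or.inl rfl, Or.inr rfl]

section WalkEdge

variable {j : ℕ} (hj : (G.src (pe j) = p j ∧ G.tgt (pe j) = p (j + 1)) ∨
  (G.src (pe j) = p (j + 1) ∧ G.tgt (pe j) = p j))
include hj

theorem incidence_walk (v : G.V) :
    G.incidence v (pe j) = (if p j = v then 1 else 0) + (if p (j + 1) = v then 1 else 0) := by
  unfold incidence
  rcases hj with ⟨hs, ht⟩ | ⟨hs, ht⟩ <;> rw [hs, ht]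
  exact add_comm _ _

theorem outflow_walk (h : G.E → M) (v : G.V) :
    G.outflow h v (pe j) = (if p j = v then G.walkFlow p pe h j else 0) -
      (if p (j + 1) = v then G.walkFlow p pe h j else 0) := by
  unfold outflow walkFlow
  rcases hj with ⟨hs, ht⟩ | ⟨hs, ht⟩ <;> rw [hs, ht]
  · simp
  · by_cases hloop : p (j + 1) = p j
    · simp [hloop]
    · simp only [hloop, if_false]
      split_ifs <;> simp

end WalkEdge

section OddCycle

variable (hclosed : p m = p 0) (hinjV : Set.InjOn p (Set.Iio m))
  (hinjE : Set.InjOn pe (Set.Iio m))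
  (hinc : ∀ i < m, (G.src (pe i) = p i ∧ G.tgt (pe i) = p (i + 1)) ∨
    (G.src (pe i) = p (i + 1) ∧ G.tgt (pe i) = p i))
  (hdeg : ∀ i < m, G.degree (p i) = 3)
include hclosed hinjV hinjE hinc hdeg

theorem IsFlow.exists_third_edge_of_cycle {h : G.E → M} (hh : G.IsFlow h) {i : ℕ} (hi : i < m) :
    ∃ e, (∀ j < m, e ≠ pe j) ∧ (G.src e = p ((i + 1) % m) ∨ G.tgt e = p ((i + 1) % m)) ∧
      (G.walkFlow p pe h ((i + 1) % m) - G.walkFlow p pe h i = h e ∨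
        G.walkFlow p pe h ((i + 1) % m) - G.walkFlow p pe h i = -h e) := by
  set k := (i + 1) % m
  have hk : k < m := Nat.mod_lt _ (by omega)
  have hpk : p k = p (i + 1) := apply_succ_mod_of_closed hclosed hi
  have hinjE' : Set.InjOn pe (Finset.range m) := by rwa [Finset.coe_range]
  have hincidence : ∑ e ∈ (Finset.range m).image pe, G.incidence (p k) e = 2 := by
    rw [Finset.sum_image hinjE',
      Finset.sum_congr rfl fun j hj => incidence_walk (hinc j (by simpa using hj)) _,
      Finset.sum_add_distrib, sum_range_ite_apply_eq hinjV hk, hpk,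
      sum_range_ite_apply_succ_eq hclosed hinjV hi]
  have houtflow : ∑ e ∈ (Finset.range m).image pe, G.outflow h (p k) e =
      G.walkFlow p pe h k - G.walkFlow p pe h i := by
    rw [Finset.sum_image hinjE',
      Finset.sum_congr rfl fun j hj => outflow_walk (hinc j (by simpa using hj)) _ _,
      Finset.sum_sub_distrib, sum_range_ite_apply_eq hinjV hk, hpk,
      sum_range_ite_apply_succ_eq hclosed hinjV hi]
  obtain ⟨e, he, hends, hval⟩ := hh.exists_third_edge (hdeg k hk) _ hincidence
  refine ⟨e, fun j hj hej => he (hej ▸ Finset.mem_image_of_mem pe (Finset.mem_range.2 hj)),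
    hends, ?_⟩
  rwa [houtflow] at hval

theorem not_isFlow_of_odd_cycle (hodd : Odd m) {I B : Set M} (hB : -B = B)
    (hIB : ∀ x ∈ I, ∀ y ∈ I, x - y ∉ B) {h : G.E → M} (hcycle : ∀ i < m, h (pe i) ∈ I ∪ -I)
    (hthird : ∀ i < m, ∀ e : G.E, (∀ j < m, e ≠ pe j) →
      (G.src e = p i ∨ G.tgt e = p i) → h e ∈ B) :
    ¬ G.IsFlow h := by
  intro hh
  have hsymm : -(I ∪ -I) = I ∪ -I := by rw [Set.union_neg, neg_neg, Set.union_comm]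
  have hwalk : ∀ j < m, G.walkFlow p pe h j ∈ I ∪ -I := fun j hj =>
    Set.mem_of_eq_or_eq_neg hsymm (walkFlow_eq_or_eq_neg h j) (hcycle j hj)
  refine hodd.not_forall_succ_mod_iff_not (G.walkFlow p pe h · ∈ I) fun i hi => ?_
  have hk : (i + 1) % m < m := Nat.mod_lt _ hodd.pos
  obtain ⟨e, hne, hends, hval⟩ :=
    hh.exists_third_edge_of_cycle hclosed hinjV hinjE hinc hdeg hi
  exact mem_iff_notMem_of_sub_mem hIB (hwalk i hi) (hwalk _ hk)
    (Set.mem_of_eq_or_eq_neg hB hval (hthird _ hk e hne hends))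

end OddCycle

end Multigraph

theorem not_hasCapFlow_of_odd_cycle {r : ℝ} (hr : 2 < r) {G : Multigraph}
    {cap : G.E → Set (AddCircle r)} {m : ℕ} (hodd : Odd m) {p : ℕ → G.V} {pe : ℕ → G.E}
    (hclosed : p m = p 0) (hinjV : Set.InjOn p (Set.Iio m)) (hinjE : Set.InjOn pe (Set.Iio m))
    (hinc : ∀ i < m, (G.src (pe i) = p i ∧ G.tgt (pe i) = p (i + 1)) ∨
      (G.src (pe i) = p (i + 1) ∧ G.tgt (pe i) = p i))
    (a : ℝ) (hcap : ∀ i < m, cap (pe i) = openArc r a (a + 1) ∪ openArc r (-a - 1) (-a))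
    (hdeg : ∀ i < m, G.degree (p i) = 3)
    (hthird : ∀ i < m, ∀ e : G.E, (∀ j < m, e ≠ pe j) →
      (G.src e = p i ∨ G.tgt e = p i) → cap e ⊆ openArc r 1 (r - 1)) :
    ¬ HasCapFlow r G cap := by
  rintro ⟨σ, f, hflow, hf⟩
  have horient {S : Set (AddCircle r)} (hS : -S = S) (e : G.E) (he : f e ∈ S) :
      (σ e : ℤ) • f e ∈ S :=
    Set.mem_of_eq_or_eq_neg hS (by rcases Int.units_eq_one_or (σ e) with h | h <;> simp [h]) he
  refine Multigraph.not_isFlow_of_odd_cycle hclosed hinjV hinjE hinc hdeg hodd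
    (I := openArc r a (a + 1)) (neg_openArc_one_sub_one hr)
    (fun x hx y hy => sub_notMem_openArc_one_sub_one hr hx hy)
    (fun i hi => ?_) (fun i hi e he hends => horient (neg_openArc_one_sub_one hr) e
      (hthird i hi e he hends (hf e))) hflow
  have hunion : cap (pe i) = openArc r a (a + 1) ∪ -openArc r a (a + 1) := by
    rw [hcap i hi, neg_openArc_add_one (by linarith)]
  rw [← hunion]
  exact horient (by rw [hunion, Set.union_neg, neg_neg, Set.union_comm]) _ (hf _)

namespace Multigraph

variable {G : Multigraph} {M N : Type*} [AddCommGroup M] [AddCommGroup N]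

theorem IsFlowOn.map {σ : G.E → ℤˣ} {f : G.E → M} (hf : G.IsFlowOn σ f) (φ : M →+ N) :
    G.IsFlowOn σ (φ ∘ f) := by
  intro v
  simpa only [map_sum, map_zsmul, Function.comp_apply] using congrArg φ (hf v)

/-- Scaling by `s / r` maps `[1, r - 1]` into `[s / r, s - s / r] ⊆ (1, s - 1)`. -/
theorem HasCNZF.hasCapFlow_openArc {r s : ℝ} (hG : G.HasCNZF r) (hrs : r < s) :
    HasCapFlow s G (fun _ => openArc s 1 (s - 1)) := by
  obtain ⟨σ, f, hflow, hf⟩ := hG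
  refine ⟨σ, _, hflow.map ((QuotientAddGroup.mk' _).comp (AddMonoidHom.mulLeft (s / r))),
    fun e => ?_⟩
  obtain ⟨h1, h2⟩ := hf e
  have hr : 0 < r := by linarith
  have hsr : 1 < s / r := (one_lt_div hr).2 hrs
  have hscale : s / r * (r - 1) = s - s / r := by field_simp
  rw [openArc_eq_image (by linarith) (by linarith)]
  refine ⟨s / r * f e, ⟨by nlinarith, ?_⟩, rfl⟩
  nlinarith

theorem netOutflow_addEdge (H : Multigraph) (u w : H.V) (h : (H.addEdge u w).E → M) (x : H.V) :
    (H.addEdge u w).netOutflow h x =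
      (if u = x then h none else 0) - (if w = x then h none else 0) +
        H.netOutflow (h ∘ some) x :=
  Fintype.sum_option _

theorem netOutflow_eq_neg_of_eq_zero {u w : G.V} (huw : u ≠ w) {h : G.E → M}
    (h0 : ∀ x, x ≠ u → x ≠ w → G.netOutflow h x = 0) :
    G.netOutflow h w = -G.netOutflow h u := by
  have hsum := sum_netOutflow_eq_zero h
  rw [Fintype.sum_eq_add u w huw fun x hx => h0 x hx.1 hx.2] at hsum
  exact eq_neg_of_add_eq_zero_right hsum

end Multigraph

/-- Conservation away from `u` and `w` makes the net outflow at `w` the opposite of that at `u`,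
so an extra edge carrying the outflow at `u` back from `w` closes it up to a flow. -/
theorem netOutflow_mem_CPcap {r : ℝ} {H : Multigraph} {u w : H.V} (huw : u ≠ w)
    {cap : H.E → Set (AddCircle r)} {σ : H.E → ℤˣ} {F : H.E → AddCircle r} (hF : ∀ d, F d ∈ cap d)
    (hinner : ∀ x, x ≠ u → x ≠ w → H.netOutflow (fun d => (σ d : ℤ) • F d) x = 0) :
    H.netOutflow (fun d => (σ d : ℤ) • F d) u ∈ CPcap r H cap u w := by
  set net := H.netOutflow (fun d => (σ d : ℤ) • F d)
  have hw : net w = -net u := Multigraph.netOutflow_eq_neg_of_eq_zero huw hinner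
  refine ⟨fun o => o.elim (-1) σ, fun o => o.elim (net u) F,
    Multigraph.isFlow_iff_netOutflow_eq_zero.2 fun (x : H.V) =>
      (Multigraph.netOutflow_addEdge H u w _ x).trans ?_, hF, rfl⟩
  change ((if u = x then ((-1 : ℤˣ) : ℤ) • net u else 0) -
    (if w = x then ((-1 : ℤˣ) : ℤ) • net u else 0)) + net x = 0
  rw [Units.val_neg, Units.val_one, neg_one_smul]
  by_cases hxu : u = x
  · subst hxu
    rw [if_pos rfl, if_neg huw.symm, sub_zero, neg_add_cancel]
  by_cases hxw : w = x
  · subst hxw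
    rw [if_neg hxu, if_pos rfl, hw]
    abel
  · rw [if_neg hxu, if_neg hxw, hinner x (Ne.symm hxu) (Ne.symm hxw)]
    abel

section EdgeReplace

variable {G : Multigraph} {H : G.E → Multigraph} {a b : ∀ e, (H e).V}
  {M : Type*} [AddCommGroup M]

theorem erEmbed_eq_inl_iff {e : G.E} (hab : a e ≠ b e) {x : (H e).V} {v : G.V} :
    erEmbed G H a b e x = Sum.inl v ↔ (x = a e ∧ G.src e = v) ∨ (x = b e ∧ G.tgt e = v) := by
  unfold erEmbed
  split_ifs with h1 h2
  · simp [h1, hab]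
  · simp [h2, Ne.symm hab]
  · simp [h1, h2]

theorem erEmbed_eq_inr_iff {e : G.E} {x : (H e).V} {x₀ : {y : (H e).V // y ≠ a e ∧ y ≠ b e}} :
    erEmbed G H a b e x = Sum.inr ⟨e, x₀⟩ ↔ x = x₀.1 := by
  unfold erEmbed
  split_ifs with h1 h2
  · simp [h1, Ne.symm x₀.2.1]
  · simp [h2, Ne.symm x₀.2.2]
  · simp [Subtype.ext_iff]

theorem erEmbed_ne_inr {e e₀ : G.E} (hne : e ≠ e₀) (x : (H e).V)
    (x₀ : {y : (H e₀).V // y ≠ a e₀ ∧ y ≠ b e₀}) : erEmbed G H a b e x ≠ Sum.inr ⟨e₀, x₀⟩ := by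
  unfold erEmbed
  split_ifs <;> simp [hne]

theorem outflow_edgeReplace_inl {e : G.E} (hab : a e ≠ b e) (h : (edgeReplace G H a b).E → M)
    (v : G.V) (d : (H e).E) :
    (edgeReplace G H a b).outflow h (Sum.inl v) ⟨e, d⟩ =
      (if G.src e = v then (H e).outflow (fun d => h ⟨e, d⟩) (a e) d else 0) +
        (if G.tgt e = v then (H e).outflow (fun d => h ⟨e, d⟩) (b e) d else 0) := by
  simp only [Multigraph.outflow, edgeReplace, erEmbed_eq_inl_iff hab]
  split_ifs <;> simp_all [Ne.symm hab]

theorem netOutflow_edgeReplace_inl (hab : ∀ e, a e ≠ b e) (h : (edgeReplace G H a b).E → M)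
    (v : G.V) :
    (edgeReplace G H a b).netOutflow h (Sum.inl v) =
      ∑ e, ((if G.src e = v then (H e).netOutflow (fun d => h ⟨e, d⟩) (a e) else 0) +
        (if G.tgt e = v then (H e).netOutflow (fun d => h ⟨e, d⟩) (b e) else 0)) := by
  refine (Fintype.sum_sigma _).trans (Finset.sum_congr rfl fun e _ => ?_)
  simp only [outflow_edgeReplace_inl (hab e), Finset.sum_add_distrib, Finset.sum_ite_irrel,
    Finset.sum_const_zero, Multigraph.netOutflow]

theorem netOutflow_edgeReplace_inr (h : (edgeReplace G H a b).E → M) (e : G.E)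
    (x : {y : (H e).V // y ≠ a e ∧ y ≠ b e}) :
    (edgeReplace G H a b).netOutflow h (Sum.inr ⟨e, x⟩) =
      (H e).netOutflow (fun d => h ⟨e, d⟩) x := by
  refine (Fintype.sum_sigma _).trans ?_
  rw [Finset.sum_eq_single e]
  · simp only [Multigraph.outflow, Multigraph.netOutflow, edgeReplace, erEmbed_eq_inr_iff]
  · intro e' _ he'
    refine Finset.sum_eq_zero fun d _ => ?_
    simp [Multigraph.outflow, edgeReplace, erEmbed_ne_inr he']
  · simp

theorem HasCapFlow.of_edgeReplace {r : ℝ} (hab : ∀ e, a e ≠ b e)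
    {cap : (edgeReplace G H a b).E → Set (AddCircle r)}
    (hK : HasCapFlow r (edgeReplace G H a b) cap) :
    HasCapFlow r G fun e => CPcap r (H e) (fun d => cap ⟨e, d⟩) (a e) (b e) := by
  obtain ⟨σ, F, hflow, hF⟩ := hK
  rw [Multigraph.IsFlowOn, Multigraph.isFlow_iff_netOutflow_eq_zero] at hflow
  set h : (edgeReplace G H a b).E → AddCircle r := fun ee => (σ ee : ℤ) • F ee
  set fG : G.E → AddCircle r := fun e => (H e).netOutflow (fun d => h ⟨e, d⟩) (a e)
  have hinner (e : G.E) (x : (H e).V) (hxa : x ≠ a e) (hxb : x ≠ b e) :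
      (H e).netOutflow (fun d => h ⟨e, d⟩) x = 0 := by
    rw [← netOutflow_edgeReplace_inr h e ⟨x, hxa, hxb⟩]
    exact hflow _
  have hb (e : G.E) : (H e).netOutflow (fun d => h ⟨e, d⟩) (b e) = -fG e :=
    Multigraph.netOutflow_eq_neg_of_eq_zero (hab e) (hinner e)
  refine ⟨fun _ => 1, fG, ?_, fun e => netOutflow_mem_CPcap (hab e) (fun d => hF ⟨e, d⟩)
    (hinner e)⟩
  rw [Multigraph.IsFlowOn, Multigraph.isFlow_iff_netOutflow_eq_zero]
  intro v
  rw [← hflow (Sum.inl v), netOutflow_edgeReplace_inl hab]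
  refine Finset.sum_congr rfl fun e _ => ?_
  simp only [Multigraph.outflow, hb, Units.val_one, one_smul]
  split_ifs <;> simp [fG, sub_eq_add_neg]

end EdgeReplace

theorem le_circFlowNumber_edgeReplace {s : ℝ} {G : Multigraph} {cap : G.E → Set (AddCircle s)}
    (hno : ¬ HasCapFlow s G cap) {H : G.E → Multigraph} {a b : ∀ e, (H e).V}
    (hab : ∀ e, a e ≠ b e) (hCP : ∀ e, CP s (H e) (a e) (b e) = cap e) :
    (s : EReal) ≤ circFlowNumber (edgeReplace G H a b) := by
  refine le_sInf ?_
  rintro _ ⟨r, rfl, hr⟩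
  rw [EReal.coe_le_coe_iff]
  by_contra! hrs
  have hcap : (fun e => CP s (H e) (a e) (b e)) = cap := funext hCP
  exact hno (hcap ▸ (hr.hasCapFlow_openArc hrs).of_edgeReplace hab)

theorem odd_cycle_no_flow_general (G : Multigraph) (cap : G.E → Set (AddCircle (5 : ℝ)))
    (m : ℕ) (hodd : Odd m) (p : ℕ → G.V) (pe : ℕ → G.E)
    (hclosed : p m = p 0)
    (hinjV : Set.InjOn p (Set.Iio m)) (hinjE : Set.InjOn pe (Set.Iio m))
    (hinc : ∀ i < m, (G.src (pe i) = p i ∧ G.tgt (pe i) = p (i + 1)) ∨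
      (G.src (pe i) = p (i + 1) ∧ G.tgt (pe i) = p i))
    (n : ℤ) (A : Set (AddCircle (5 : ℝ)))
    (hA : A = openArc 5 (n : ℝ) ((n : ℝ) + 1) ∪ openArc 5 (-(n : ℝ) - 1) (-(n : ℝ)))
    (hcapA : ∀ i < m, cap (pe i) = A)
    (hdeg : ∀ i < m, G.degree (p i) = 3)
    (hthird : ∀ i < m, ∀ e : G.E, (∀ j < m, e ≠ pe j) →
      (G.src e = p i ∨ G.tgt e = p i) → cap e ⊆ openArc 5 1 4) :
    ¬ HasCapFlow 5 G cap ∧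
    ∀ (H : G.E → Multigraph) (a b : ∀ e, (H e).V), (∀ e, a e ≠ b e) →
      (∀ e, CP 5 (H e) (a e) (b e) = cap e) →
      ((5 : ℝ) : EReal) ≤ circFlowNumber (edgeReplace G H a b) := by
  have hno : ¬ HasCapFlow 5 G cap := by
    refine not_hasCapFlow_of_odd_cycle (by norm_num) hodd hclosed hinjV hinjE hinc n
      (fun i hi => (hcapA i hi).trans hA) hdeg fun i hi e he hends => ?_
    rw [show (5 : ℝ) - 1 = 4 by norm_num]
    exact hthird i hi e he hends
  exact ⟨hno, fun H a b hab hCP => le_circFlowNumber_edgeReplace hno hab hCP⟩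

/-- If a capacitated graph `G` contains an odd cycle along
vertices of degree 3, all of whose edges carry the same capacity `A` — a
symmetric union of two distinct open unit integer intervals of `ℝ/5ℤ` (so
`Me(A) = 2`) — and the third edge at each vertex of the cycle has capacity
contained in `(1,4)`, then `G` admits no sub-5-MCNZF; consequently any graph
obtained by realizing each capacity by a g-edge of that open 5-capacity has
circular flow number at least 5. -/
theorem odd_cycle_no_flow (G : Multigraph) (cap : G.E → Set (AddCircle (5 : ℝ)))
    (m : ℕ) (hodd : Odd m) (p : ℕ → G.V) (pe : ℕ → G.E)
    (hclosed : p m = p 0)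
    (hinjV : Set.InjOn p (Set.Iio m)) (hinjE : Set.InjOn pe (Set.Iio m))
    (hinc : ∀ i < m, (G.src (pe i) = p i ∧ G.tgt (pe i) = p (i + 1)) ∨
      (G.src (pe i) = p (i + 1) ∧ G.tgt (pe i) = p i))
    (n : ℤ) (A : Set (AddCircle (5 : ℝ)))
    (hA : A = openArc 5 (n : ℝ) ((n : ℝ) + 1) ∪ openArc 5 (-(n : ℝ) - 1) (-(n : ℝ)))
    (htwo : openArc 5 (n : ℝ) ((n : ℝ) + 1) ≠ openArc 5 (-(n : ℝ) - 1) (-(n : ℝ)))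
    (hcapA : ∀ i < m, cap (pe i) = A)
    (hdeg : ∀ i < m, G.degree (p i) = 3)
    (hthird : ∀ i < m, ∀ e : G.E, (∀ j < m, e ≠ pe j) →
      (G.src e = p i ∨ G.tgt e = p i) → cap e ⊆ openArc 5 1 4) :
    ¬ HasCapFlow 5 G cap ∧
    ∀ (H : G.E → Multigraph) (a b : ∀ e, (H e).V), (∀ e, a e ≠ b e) →
      (∀ e, CP 5 (H e) (a e) (b e) = cap e) →
      ((5 : ℝ) : EReal) ≤ circFlowNumber (edgeReplace G H a b) :=
  odd_cycle_no_flow_general G cap m hodd p pe hclosed hinjV hinjE hinc n A hA hcapA hdeg hthird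
end

section
/- Consider the capacitated graph obtained from the complete graph K₄ on vertices {u, v, w, t} by deleting the edge uv, assigning capacity (1,2) ∪ (3,4) ⊆ ℝ/5ℤ to the edges uw and vw, and capacity (1,4) to the edges ut, vt, and wt. The open 5-capacity of the resulting capacitated g-edge with terminals u and v equals (4,1) ∪ (2,3). -/
open Finset


open Finset

/-- `K₄` on the vertices `u = 0`, `v = 1`, `w = 2`, `t = 3`, with the edge `uv`
deleted.  The five remaining edges, in order, are `uw, vw, ut, vt, wt`. -/
def K4minus : Multigraph where
  V := Fin 4
  E := Fin 5
  src := ![0, 1, 0, 1, 2]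
  tgt := ![2, 2, 3, 3, 3]

/-- Capacities: `(1,2) ∪ (3,4)` on `uw` and `vw`, `(1,4)` on `ut`, `vt` and
`wt`. -/
noncomputable def K4minusCap9 : K4minus.E → Set (AddCircle (5 : ℝ)) :=
  ![openArc 5 1 2 ∪ openArc 5 3 4, openArc 5 1 2 ∪ openArc 5 3 4,
    openArc 5 1 4, openArc 5 1 4, openArc 5 1 4]

/-!
Reversing an edge negates its value and every capacity here is symmetric under negation, so it
suffices to look at flows in the reference orientation. Lift the values on `uw, vw` to reals
`α, β ∈ (1,2) ∪ (3,4)`. The value `α + β` on `wt` must lie in `(1,4)`, which rules out one of them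
in `(1,2)` and the other in `(3,4)` (their sum would lie in `(4,6)`). If both lie in `(1,2)`, the
value `τ` on `e₀` satisfies `τ = β + f(vt) ∈ (2,6)` and `-τ = α + f(ut) ∈ (2,6)`, i.e.
`τ ∈ (4,8)`; the arcs `(2,6)` and `(4,8)` of `ℝ/5ℤ` meet exactly in `(4,6) ∪ (2,3)`.
The case `(3,4)` is the same with the roles of `τ` and `-τ` exchanged. Conversely, explicit flows
realise every value of `(4,6) ∪ (2,3)`.
-/

open Set

namespace AddCircle

variable {p : ℝ}

theorem coe_mem_image_Ioo (n : ℤ) {s a b : ℝ} (h : s + n * p ∈ Ioo a b) :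
    (s : AddCircle p) ∈ ((↑) '' Ioo a b : Set (AddCircle p)) :=
  ⟨_, h, by simp⟩

theorem add_mem_image_Ioo {x y : AddCircle p} {a b c d : ℝ}
    (hx : x ∈ ((↑) '' Ioo a b : Set (AddCircle p)))
    (hy : y ∈ ((↑) '' Ioo c d : Set (AddCircle p))) :
    x + y ∈ ((↑) '' Ioo (a + c) (b + d) : Set (AddCircle p)) := by
  obtain ⟨s, hs, rfl⟩ := hx
  obtain ⟨t, ht, rfl⟩ := hy
  exact ⟨s + t, ⟨by linarith [hs.1, ht.1], by linarith [hs.2, ht.2]⟩, rfl⟩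

theorem neg_mem_image_Ioo (n : ℤ) {x : AddCircle p} {a b : ℝ}
    (hx : x ∈ ((↑) '' Ioo a b : Set (AddCircle p))) :
    -x ∈ ((↑) '' Ioo (n * p - b) (n * p - a) : Set (AddCircle p)) := by
  obtain ⟨s, hs, rfl⟩ := hx
  exact coe_mem_image_Ioo n ⟨by linarith [hs.2], by linarith [hs.1]⟩

theorem image_Ioo_inter_image_Ioo_subset (hp : 0 < p) {a b c d : ℝ}
    (hda : d - a ≤ 2 * p) (hbc : b - c ≤ p) :
    ((↑) '' Ioo a b ∩ (↑) '' Ioo c d : Set (AddCircle p)) ⊆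
      (↑) '' Ioo c b ∪ (↑) '' Ioo a (d - p) := by
  rintro _ ⟨⟨s, hs, rfl⟩, ⟨q, hq, hqs⟩⟩
  obtain ⟨n, hn⟩ : ∃ n : ℤ, n • p = q - s := by
    rw [← coe_eq_zero_iff, coe_sub, hqs, sub_self]
  rw [zsmul_eq_mul] at hn
  -- `q - s = n p` lies in `(c - b, d - a) ⊆ (-p, 2p)`, so `n` is `0` or `1`
  have h₀ : (-1 : ℝ) < n := by nlinarith [hs.2, hq.1]
  have h₁ : (n : ℝ) < 2 := by nlinarith [hs.1, hq.2]
  obtain rfl | rfl : n = 0 ∨ n = 1 := by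
    have : (-1 : ℤ) < n := by exact_mod_cast h₀
    have : n < 2 := by exact_mod_cast h₁
    omega
  · exact Or.inl ⟨s, ⟨by push_cast at hn; linarith [hq.1], hs.2⟩, rfl⟩
  · exact Or.inr ⟨s, ⟨hs.1, by push_cast at hn; linarith [hq.2]⟩, rfl⟩

end AddCircle

theorem openArc_eq_image_Ioo {r a b c : ℝ} (n : ℤ) (hr : 0 < r) (hc : c = b + n * r)
    (h₁ : a < c) (h₂ : c ≤ a + r) : openArc r a b = ((↑) '' Ioo a c : Set (AddCircle r)) := by
  subst hc
  have hfract : Int.fract ((a - b) / r) = (a - b) / r + (1 - n) := by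
    rw [Int.fract_eq_iff]
    refine ⟨?_, ?_, n - 1, by push_cast; ring⟩
    · rw [div_add' _ _ _ hr.ne', le_div_iff₀ hr]; linarith
    · rw [div_add' _ _ _ hr.ne', div_lt_one hr]; linarith
  rw [openArc, hfract, add_mul, div_mul_cancel₀ _ hr.ne']
  congr 2
  ring

local notation "𝕀(" a ", " b ")" => ((↑) '' Set.Ioo (a : ℝ) (b : ℝ) : Set (AddCircle (5 : ℝ)))

theorem Multigraph.IsFlow.map {G : Multigraph} {M N : Type*} [AddCommMonoid M] [AddCommMonoid N]
    {f : G.E → M} (hf : G.IsFlow f) (φ : M →+ N) : G.IsFlow (fun e => φ (f e)) := by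
  intro v
  simp only [← map_sum, hf v]

theorem mem_CPcap_of_isFlow {r : ℝ} {G : Multigraph} {cap : G.E → Set (AddCircle r)} {u v : G.V}
    {g : Option G.E → AddCircle r} (hg : (G.addEdge u v).IsFlow g)
    (hcap : ∀ e, g (some e) ∈ cap e) : g none ∈ CPcap r G cap u v :=
  ⟨fun _ => 1, g, by simpa [Multigraph.IsFlowOn] using hg, hcap, rfl⟩

theorem coe_mem_CPcap_of_isFlow {r : ℝ} {G : Multigraph} {cap : G.E → Set (AddCircle r)}
    {u v : G.V} {h : Option G.E → ℝ} (hh : (G.addEdge u v).IsFlow h)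
    (hcap : ∀ e, (h (some e) : AddCircle r) ∈ cap e) : (h none : AddCircle r) ∈ CPcap r G cap u v :=
  mem_CPcap_of_isFlow (hh.map (QuotientAddGroup.mk' _)) hcap

theorem exists_isFlow_of_mem_CPcap {r : ℝ} {G : Multigraph} {cap : G.E → Set (AddCircle r)}
    {u v : G.V} (hneg : ∀ e, ∀ x ∈ cap e, -x ∈ cap e) {t : AddCircle r}
    (ht : t ∈ CPcap r G cap u v) :
    ∃ g : Option G.E → AddCircle r, (G.addEdge u v).IsFlow g ∧ (∀ e, g (some e) ∈ cap e) ∧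
      (g none = t ∨ g none = -t) := by
  obtain ⟨σ, f, hf, hcap, rfl⟩ := ht
  refine ⟨fun e => (σ e : ℤ) • f e, hf, fun e => ?_, ?_⟩
  · rcases Int.units_eq_one_or (σ (some e)) with h | h <;> simp [h, hcap e, hneg]
  · rcases Int.units_eq_one_or (σ none) with h | h <;> simp [h]

theorem K4minus_addEdge_isFlow_iff {M : Type*} [AddCommMonoid M] (g : Option (Fin 5) → M) :
    (K4minus.addEdge ((0 : Fin 4) : K4minus.V) ((1 : Fin 4) : K4minus.V)).IsFlow g ↔
      g none + (g (some 0) + g (some 2)) = 0 ∧ g (some 1) + g (some 3) = g none ∧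
        g (some 4) = g (some 0) + g (some 1) ∧ 0 = g (some 2) + g (some 3) + g (some 4) := by
  unfold Multigraph.IsFlow Multigraph.addEdge K4minus
  simp [Fin.forall_fin_succ, Finset.sum_filter, Fintype.sum_option, Fin.sum_univ_five]

theorem K4minusCap9_eq :
    K4minusCap9 = ![𝕀(1, 2) ∪ 𝕀(3, 4), 𝕀(1, 2) ∪ 𝕀(3, 4), 𝕀(1, 4), 𝕀(1, 4), 𝕀(1, 4)] := by
  have h (a b : ℝ) (h₁ : a < b) (h₂ : b ≤ a + 5) : openArc 5 a b = 𝕀(a, b) :=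
    openArc_eq_image_Ioo 0 (by norm_num) (by simp) h₁ h₂
  simp only [K4minusCap9, h 1 2 (by norm_num) (by norm_num), h 3 4 (by norm_num) (by norm_num),
    h 1 4 (by norm_num) (by norm_num)]
  rfl

theorem mem_of_mem_Ioo_two_six_of_mem_Ioo_four_eight {x : AddCircle (5 : ℝ)}
    (h₁ : x ∈ 𝕀(2, 6)) (h₂ : x ∈ 𝕀(4, 8)) : x ∈ 𝕀(4, 6) ∪ 𝕀(2, 3) := by
  have := AddCircle.image_Ioo_inter_image_Ioo_subset (by norm_num) (by norm_num) (by norm_num)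
    ⟨h₁, h₂⟩
  norm_num at this
  exact this

theorem notMem_Ioo_one_four_of_mem_Ioo_four_six {x : AddCircle (5 : ℝ)} (h : x ∈ 𝕀(4, 6)) :
    x ∉ 𝕀(1, 4) := fun h' => by
  have := AddCircle.image_Ioo_inter_image_Ioo_subset (by norm_num) (by norm_num) (by norm_num)
    ⟨h', h⟩
  norm_num at this

theorem K4minus_flow_value_mem {g : Option (Fin 5) → AddCircle (5 : ℝ)}
    (hg : (K4minus.addEdge ((0 : Fin 4) : K4minus.V) ((1 : Fin 4) : K4minus.V)).IsFlow g)
    (hcap : ∀ e, g (some e) ∈ K4minusCap9 e) : g none ∈ 𝕀(4, 6) ∪ 𝕀(2, 3) := by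
  obtain ⟨hu, hv, hw, -⟩ := (K4minus_addEdge_isFlow_iff g).mp hg
  rw [K4minusCap9_eq] at hcap
  have hneg : -g none = g (some 0) + g (some 2) := neg_eq_of_add_eq_zero_right hu
  have h2 : g (some 2) ∈ 𝕀(1, 4) := hcap (2 : Fin 5)
  have h3 : g (some 3) ∈ 𝕀(1, 4) := hcap (3 : Fin 5)
  have h4 : g (some 4) ∉ 𝕀(4, 6) := fun h =>
    notMem_Ioo_one_four_of_mem_Ioo_four_six h (hcap (4 : Fin 5))
  have hvalue (a b c d : ℝ) (h0 : g (some 0) ∈ 𝕀(a, b)) (h1 : g (some 1) ∈ 𝕀(c, d)) :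
      g none ∈ 𝕀(c + 1, d + 4) ∧ g none ∈ 𝕀(2 * 5 - (b + 4), 2 * 5 - (a + 1)) := by
    refine ⟨hv ▸ AddCircle.add_mem_image_Ioo h1 h3, ?_⟩
    have := AddCircle.neg_mem_image_Ioo 2 (hneg ▸ AddCircle.add_mem_image_Ioo h0 h2)
    rw [neg_neg] at this
    exact_mod_cast this
  rcases hcap (0 : Fin 5) with h0 | h0 <;> rcases hcap (1 : Fin 5) with h1 | h1
  · obtain ⟨ht₁, ht₂⟩ := hvalue _ _ _ _ h0 h1
    norm_num at ht₁ ht₂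
    exact mem_of_mem_Ioo_two_six_of_mem_Ioo_four_eight ht₁ ht₂
  · have := hw ▸ AddCircle.add_mem_image_Ioo h0 h1
    norm_num at this
    exact absurd this h4
  · have := hw ▸ AddCircle.add_mem_image_Ioo h0 h1
    norm_num at this
    exact absurd this h4
  · obtain ⟨ht₁, ht₂⟩ := hvalue _ _ _ _ h0 h1
    norm_num at ht₁ ht₂
    exact mem_of_mem_Ioo_two_six_of_mem_Ioo_four_eight ht₂ ht₁

theorem coe_mem_CPcap_of_mem_Ioo_four_six {τ : ℝ} (hτ : τ ∈ Set.Ioo 4 6) :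
    (τ : AddCircle (5 : ℝ)) ∈
      CPcap 5 K4minus K4minusCap9 ((0 : Fin 4) : K4minus.V) ((1 : Fin 4) : K4minus.V) := by
  obtain ⟨hτ₁, hτ₂⟩ := hτ
  let h : Option (Fin 5) → ℝ :=
    fun e => e.elim τ ![(18 - τ) / 4, (8 + τ) / 4, -(18 + 3 * τ) / 4, (3 * τ - 8) / 4, 13 / 2]
  refine coe_mem_CPcap_of_isFlow (G := K4minus) (h := h)
    ((K4minus_addEdge_isFlow_iff h).mpr ?_) ?_
  · refine ⟨?_, ?_, ?_, ?_⟩ <;> simp [h] <;> ring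
  · rw [K4minusCap9_eq]
    intro e
    fin_cases e <;>
      [refine Or.inr (AddCircle.coe_mem_image_Ioo 0 ?_);
        refine Or.inr (AddCircle.coe_mem_image_Ioo 0 ?_);
        refine AddCircle.coe_mem_image_Ioo 2 ?_; refine AddCircle.coe_mem_image_Ioo 0 ?_;
        refine AddCircle.coe_mem_image_Ioo (-1) ?_] <;>
      (norm_num [h, Option.elim] <;> constructor <;> linarith)

theorem coe_mem_CPcap_of_mem_Ioo_two_three {τ : ℝ} (hτ : τ ∈ Set.Ioo 2 3) :
    (τ : AddCircle (5 : ℝ)) ∈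
      CPcap 5 K4minus K4minusCap9 ((0 : Fin 4) : K4minus.V) ((1 : Fin 4) : K4minus.V) := by
  obtain ⟨hτ₁, hτ₂⟩ := hτ
  let h : Option (Fin 5) → ℝ :=
    fun e => e.elim τ ![(5 - τ) / 2, τ / 2, -(5 + τ) / 2, τ / 2, 5 / 2]
  refine coe_mem_CPcap_of_isFlow (G := K4minus) (h := h)
    ((K4minus_addEdge_isFlow_iff h).mpr ?_) ?_
  · refine ⟨?_, ?_, ?_, ?_⟩ <;> simp [h] <;> ring
  · rw [K4minusCap9_eq]
    intro e
    fin_cases e <;>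
      [refine Or.inl (AddCircle.coe_mem_image_Ioo 0 ?_);
        refine Or.inl (AddCircle.coe_mem_image_Ioo 0 ?_);
        refine AddCircle.coe_mem_image_Ioo 1 ?_; refine AddCircle.coe_mem_image_Ioo 0 ?_;
        refine AddCircle.coe_mem_image_Ioo 0 ?_] <;>
      (norm_num [h, Option.elim] <;> constructor <;> linarith)

theorem neg_mem_K4minusCap9 (e : K4minus.E) {x : AddCircle (5 : ℝ)} (hx : x ∈ K4minusCap9 e) :
    -x ∈ K4minusCap9 e := by
  have hA {y : AddCircle (5 : ℝ)} (hy : y ∈ 𝕀(1, 2) ∪ 𝕀(3, 4)) : -y ∈ 𝕀(1, 2) ∪ 𝕀(3, 4) := by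
    rcases hy with hy | hy
    · have := AddCircle.neg_mem_image_Ioo 1 hy
      norm_num at this
      exact Or.inr this
    · have := AddCircle.neg_mem_image_Ioo 1 hy
      norm_num at this
      exact Or.inl this
  have hB {y : AddCircle (5 : ℝ)} (hy : y ∈ 𝕀(1, 4)) : -y ∈ 𝕀(1, 4) := by
    have := AddCircle.neg_mem_image_Ioo 1 hy
    norm_num at this
    exact this
  rw [K4minusCap9_eq] at hx ⊢
  fin_cases e
  exacts [hA hx, hA hx, hB hx, hB hx, hB hx]

theorem neg_mem_Ioo_four_six_union_Ioo_two_three {x : AddCircle (5 : ℝ)}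
    (hx : x ∈ 𝕀(4, 6) ∪ 𝕀(2, 3)) : -x ∈ 𝕀(4, 6) ∪ 𝕀(2, 3) := by
  rcases hx with hx | hx
  · have := AddCircle.neg_mem_image_Ioo 2 hx
    norm_num at this
    exact Or.inl this
  · have := AddCircle.neg_mem_image_Ioo 1 hx
    norm_num at this
    exact Or.inr this

/-- The open 5-capacity of the capacitated g-edge obtained
from `K₄` by deleting the edge `uv` of a triangle `uvw` and giving capacity
`(1,2) ∪ (3,4)` to the other two edges `uw, vw` of that triangle, and `(1,4)`
to the remaining edges — with terminals `u` and `v` — equals `(4,1) ∪ (2,3)`. -/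
theorem K4minus_capacity9 :
    CPcap 5 K4minus K4minusCap9 ((0 : Fin 4) : K4minus.V) ((1 : Fin 4) : K4minus.V)
      = openArc 5 4 1 ∪ openArc 5 2 3 := by
  rw [openArc_eq_image_Ioo 1 (by norm_num) (by norm_num) (c := 6) (by norm_num) (by norm_num),
    openArc_eq_image_Ioo 0 (by norm_num) (by norm_num) (c := 3) (by norm_num) (by norm_num)]
  ext t
  constructor
  · intro ht
    obtain ⟨g, hg, hcap, hgt⟩ := exists_isFlow_of_mem_CPcap neg_mem_K4minusCap9 ht
    have hval : g none ∈ 𝕀(4, 6) ∪ 𝕀(2, 3) := K4minus_flow_value_mem hg hcap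
    rcases hgt with rfl | hgt
    · exact hval
    · simpa [hgt] using neg_mem_Ioo_four_six_union_Ioo_two_three hval
  · rintro (⟨τ, hτ, rfl⟩ | ⟨τ, hτ, rfl⟩)
    exacts [coe_mem_CPcap_of_mem_Ioo_four_six hτ, coe_mem_CPcap_of_mem_Ioo_two_three hτ]
end
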